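/- For every integer m ≥ 1, let a_m denote the coefficient of X^m in the polynomial X · ∏_{k=1}^{m} (1 − X^{3k})² (1 − X^{9k})² ∈ ℤ[X] (the m-th Fourier coefficient of the eta product η(3z)²η(9z)²). Then a_m ≡ τ(m) (mod 3) for all m ≥ 1. -/

import Mathlib

open Polynomial

/-- Ramanujan's tau function: `τ(n)` is the coefficient of `X^n` in
`X * ∏_{k=1}^{n} (1 - X^k)^24 ∈ ℤ[X]`. -/
noncomputable def ramanujanTau (n : ℕ) : ℤ :=
  (X * ∏ k ∈ Finset.Icc 1 n, ((1 : ℤ[X]) - X ^ k) ^ 24).coeff n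

/-! Modulo 3 the Frobenius gives `(1 - X^k)^3 = 1 - X^{3k}`, so each factor
`(1 - X^{3k})^2 (1 - X^{9k})^2` of the eta product reduces to `(1 - X^k)^{6 + 18}`, the
corresponding factor of `Δ`; hence the two truncated products agree in `(ZMod 3)[X]`. -/

theorem Polynomial.one_sub_X_pow_pow_expChar {R : Type*} [CommRing R] (p : ℕ) [ExpChar R p]
    (j : ℕ) : ((1 : R[X]) - X ^ j) ^ p = 1 - X ^ (p * j) := by
  rw [sub_pow_expChar, one_pow, ← pow_mul, mul_comm]

theorem Polynomial.one_sub_X_pow_three_mul_sq_mul_sq_eq_pow_24 {R : Type*} [CommRing R]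
    [ExpChar R 3] (k : ℕ) :
    ((1 : R[X]) - X ^ (3 * k)) ^ 2 * (1 - X ^ (9 * k)) ^ 2 = (1 - X ^ k) ^ 24 := by
  rw [show 9 * k = 3 * (3 * k) by ring, ← one_sub_X_pow_pow_expChar 3 (3 * k),
    ← one_sub_X_pow_pow_expChar 3 k, ← pow_mul, ← pow_mul, ← pow_mul, ← pow_add]

theorem Polynomial.coeff_modEq_of_map_intCast_eq {n : ℕ} {f g : ℤ[X]}
    (h : f.map (Int.castRingHom (ZMod n)) = g.map (Int.castRingHom (ZMod n))) (m : ℕ) :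
    f.coeff m ≡ g.coeff m [ZMOD n] := by
  rw [← ZMod.intCast_eq_intCast_iff]
  simpa only [coeff_map, eq_intCast] using congrArg (coeff · m) h

theorem f27_coeff_congr_tau_mod_three_general (m : ℕ) :
    (X * ∏ k ∈ Finset.Icc 1 m,
        ((1 : ℤ[X]) - X ^ (3 * k)) ^ 2 * ((1 : ℤ[X]) - X ^ (9 * k)) ^ 2).coeff m ≡
      ramanujanTau m [ZMOD 3] := by
  refine coeff_modEq_of_map_intCast_eq ?_ m
  simp only [Polynomial.map_mul, Polynomial.map_prod, Polynomial.map_pow, Polynomial.map_sub,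
    Polynomial.map_one, Polynomial.map_X]
  exact congrArg _ (Finset.prod_congr rfl fun k _ => one_sub_X_pow_three_mul_sq_mul_sq_eq_pow_24 k)

theorem f27_coeff_congr_tau_mod_three (m : ℕ) (hm : 1 ≤ m) :
    (X * ∏ k ∈ Finset.Icc 1 m,
        ((1 : ℤ[X]) - X ^ (3 * k)) ^ 2 * ((1 : ℤ[X]) - X ^ (9 * k)) ^ 2).coeff m ≡
      ramanujanTau m [ZMOD 3] :=
  f27_coeff_congr_tau_mod_three_general m
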